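/- Let G ∈ ℝ^{n×m} have full column rank (so GᵀG is positive definite), and let F ∈ ℝ^{n×r} with r ≥ m. Suppose ‖F Fᵀ − G Gᵀ‖_F < λ_min(GᵀG)/√2. Let P be the n×n matrix of the orthogonal projection of ℝ^n onto the column space of F. Then ‖(I − P) G‖_F ≤ ‖F Fᵀ − G Gᵀ‖_F / √(λ_min(GᵀG)). -/

import Mathlib

/-!
Let `Q = 1 - P`, the orthogonal projection onto the complement of the column space of `F`.
Since `Q F = 0`, we get `Q (F Fᵀ - G Gᵀ) = -(Q G) Gᵀ`, whose squared Frobenius norm is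
`tr ((Q G) (Gᵀ G) (Q G)ᵀ) ≥ λ_min(Gᵀ G) ‖Q G‖²_F`. On the other hand `Q` is an orthogonal
projection, so `‖Q (F Fᵀ - G Gᵀ)‖_F ≤ ‖F Fᵀ - G Gᵀ‖_F`.
-/

open Matrix

/-- Frobenius inner product of two real matrices. -/
noncomputable def finner {m n : Type*} [Fintype m] [Fintype n]
    (A B : Matrix m n ℝ) : ℝ := (Aᵀ * B).trace

/-- Frobenius norm of a real matrix. -/
noncomputable def fnorm {m n : Type*} [Fintype m] [Fintype n]
    (A : Matrix m n ℝ) : ℝ := Real.sqrt (finner A A)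

open scoped Classical in
/-- Square root of a positive semidefinite real matrix (junk value `0` otherwise). -/
noncomputable def psqrt {r : ℕ} (M : Matrix (Fin r) (Fin r) ℝ) : Matrix (Fin r) (Fin r) ℝ :=
  if h : M.PosSemidef then
    h.1.eigenvectorUnitary.1 * diagonal ((RCLike.ofReal : ℝ → ℝ) ∘ Real.sqrt ∘ h.1.eigenvalues) *
      (star h.1.eigenvectorUnitary : Matrix (Fin r) (Fin r) ℝ) else 0

open scoped Classical in
/-- Smallest eigenvalue of a symmetric real matrix (junk value `0` otherwise). -/
noncomputable def lammin {r : ℕ} (M : Matrix (Fin r) (Fin r) ℝ) : ℝ :=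
  if h : M.IsHermitian then ⨅ i, h.eigenvalues i else 0

open scoped Classical in
/-- Largest eigenvalue of a symmetric real matrix (junk value `0` otherwise). -/
noncomputable def lammax {r : ℕ} (M : Matrix (Fin r) (Fin r) ℝ) : ℝ :=
  if h : M.IsHermitian then ⨆ i, h.eigenvalues i else 0

/-- The matrix of the orthogonal projection of `ℝ^n` onto the column space of `F`. -/
noncomputable def projCol {n r : ℕ} (F : Matrix (Fin n) (Fin r) ℝ) :
    Matrix (Fin n) (Fin n) ℝ :=
  Matrix.toEuclideanLin.symm
    ((LinearMap.range (Matrix.toEuclideanLin F)).subtype ∘ₗ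
      (Submodule.orthogonalProjectionOnto (LinearMap.range (Matrix.toEuclideanLin F))).toLinearMap)

section Frobenius

variable {l m n : Type*} [Fintype l] [Fintype m] [Fintype n]

lemma finner_self_nonneg (A : Matrix m n ℝ) : 0 ≤ finner A A := by
  simpa [finner, conjTranspose_eq_transpose_of_trivial] using
    (posSemidef_conjTranspose_mul_self A).trace_nonneg

lemma finner_neg_neg (A : Matrix m n ℝ) : finner (-A) (-A) = finner A A := by
  simp [finner]

lemma finner_mul_transpose_self (X : Matrix l n ℝ) (B : Matrix m n ℝ) :
    finner (X * Bᵀ) (X * Bᵀ) = (X * (Bᵀ * B) * Xᵀ).trace := by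
  rw [finner, transpose_mul, transpose_transpose, Matrix.mul_assoc, trace_mul_comm,
    Matrix.mul_assoc, Matrix.mul_assoc, trace_mul_comm, Matrix.mul_assoc]

lemma finner_mul_self_le_of_isStarProjection [DecidableEq m] {Q : Matrix m m ℝ}
    (hQ : IsStarProjection Q) (E : Matrix m n ℝ) : finner (Q * E) (Q * E) ≤ finner E E := by
  have hQt : Qᵀ = Q := by
    simpa [star_eq_conjTranspose, conjTranspose_eq_transpose_of_trivial] using
      hQ.isSelfAdjoint.star_eq
  have hR : IsStarProjection (1 - Q) := hQ.one_sub
  have hRt : (1 - Q)ᵀ = 1 - Q := by rw [transpose_sub, transpose_one, hQt]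
  -- `‖E‖² = ‖QE‖² + ‖(1 - Q)E‖²`, as `Qᵀ Q + (1 - Q)ᵀ (1 - Q) = Q + (1 - Q) = 1`
  have hsplit : finner E E = finner (Q * E) (Q * E) + finner ((1 - Q) * E) ((1 - Q) * E) := by
    simp only [finner, transpose_mul, hQt, hRt, Matrix.mul_assoc, ← Matrix.mul_assoc Q Q,
      ← Matrix.mul_assoc (1 - Q) (1 - Q), hQ.isIdempotentElem.eq, hR.isIdempotentElem.eq,
      ← trace_add, ← Matrix.mul_add, ← Matrix.add_mul, add_sub_cancel, Matrix.one_mul]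
  linarith [finner_self_nonneg ((1 - Q) * E)]

end Frobenius

section SmallestEigenvalue

variable {k : ℕ}

open scoped MatrixOrder in
lemma Matrix.IsHermitian.posSemidef_sub_lammin_smul_one {M : Matrix (Fin k) (Fin k) ℝ}
    (hM : M.IsHermitian) : (M - lammin M • 1).PosSemidef := by
  rw [← Matrix.nonneg_iff_posSemidef, sub_nonneg, ← Algebra.algebraMap_eq_smul_one,
    algebraMap_le_iff_le_spectrum hM.isSelfAdjoint, hM.spectrum_real_eq_range_eigenvalues]
  rintro _ ⟨i, rfl⟩
  rw [lammin, dif_pos hM]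
  exact ciInf_le (Finite.bddBelow_range _) i

lemma Matrix.IsHermitian.lammin_mul_trace_le {l : Type*} [Fintype l] {M : Matrix (Fin k) (Fin k) ℝ}
    (hM : M.IsHermitian) (X : Matrix l (Fin k) ℝ) :
    lammin M * (X * Xᵀ).trace ≤ (X * M * Xᵀ).trace := by
  have h := (hM.posSemidef_sub_lammin_smul_one.mul_mul_conjTranspose_same X).trace_nonneg
  rw [conjTranspose_eq_transpose_of_trivial, Matrix.mul_sub, Matrix.sub_mul, trace_sub,
    Matrix.mul_smul, Matrix.smul_mul, trace_smul, Matrix.mul_one, smul_eq_mul] at h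
  linarith

lemma Matrix.PosDef.lammin_pos [NeZero k] {M : Matrix (Fin k) (Fin k) ℝ} (hM : M.PosDef) :
    0 < lammin M := by
  obtain ⟨i, hi⟩ := Finite.exists_min hM.1.eigenvalues
  rw [lammin, dif_pos hM.1, le_antisymm (ciInf_le (Finite.bddBelow_range _) i) (le_ciInf hi)]
  exact hM.eigenvalues_pos i

lemma lammin_mul_finner_le {l n : Type*} [Fintype l] [Fintype n]
    (X : Matrix l (Fin k) ℝ) (B : Matrix n (Fin k) ℝ) :
    lammin (Bᵀ * B) * finner X X ≤ finner (X * Bᵀ) (X * Bᵀ) := by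
  have hB : (Bᵀ * B).IsHermitian := by
    simpa [conjTranspose_eq_transpose_of_trivial] using isHermitian_conjTranspose_mul_self B
  rw [finner_mul_transpose_self, finner, trace_mul_comm]
  exact hB.lammin_mul_trace_le X

end SmallestEigenvalue

section ProjCol

variable {n r : ℕ}

lemma projCol_eq_symm_toEuclideanCLM (F : Matrix (Fin n) (Fin r) ℝ) :
    projCol F = (toEuclideanCLM (n := Fin n) (𝕜 := ℝ)).symm
      (LinearMap.range (toEuclideanLin F)).starProjection := by
  rw [StarAlgEquiv.eq_symm_apply]
  apply ContinuousLinearMap.coe_injective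
  rw [coe_toEuclideanCLM_eq_toEuclideanLin, projCol, LinearEquiv.apply_symm_apply]
  rfl

lemma isStarProjection_projCol (F : Matrix (Fin n) (Fin r) ℝ) : IsStarProjection (projCol F) := by
  rw [projCol_eq_symm_toEuclideanCLM]
  exact (isStarProjection_starProjection (U := LinearMap.range (toEuclideanLin F))).map
    (toEuclideanCLM (n := Fin n) (𝕜 := ℝ)).symm.toStarAlgHom

lemma projCol_mul_self (F : Matrix (Fin n) (Fin r) ℝ) : projCol F * F = F := by
  apply toEuclideanLin.injective
  rw [toEuclideanLin, toLpLin_mul 2 2 2, projCol, LinearEquiv.apply_symm_apply]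
  ext x : 1
  exact Submodule.starProjection_eq_self_iff.mpr (LinearMap.mem_range_self _ x)

lemma one_sub_projCol_mul_self (F : Matrix (Fin n) (Fin r) ℝ) : (1 - projCol F) * F = 0 := by
  rw [Matrix.sub_mul, projCol_mul_self, Matrix.one_mul, sub_self]

end ProjCol

theorem stmt_9_general {n m r : ℕ}
    (G : Matrix (Fin n) (Fin m) ℝ) (hG : (Gᵀ * G).PosDef)
    (F : Matrix (Fin n) (Fin r) ℝ)
    (P : Matrix (Fin n) (Fin n) ℝ) (hP : P = projCol F) :
    fnorm ((1 - P) * G) ≤ fnorm (F * Fᵀ - G * Gᵀ) / Real.sqrt (lammin (Gᵀ * G)) := by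
  subst hP
  cases m with
  | zero =>
    rw [fnorm, finner, trace, Finset.univ_eq_empty, Finset.sum_empty, Real.sqrt_zero]
    exact div_nonneg (Real.sqrt_nonneg _) (Real.sqrt_nonneg _)
  | succ m =>
    set Q := 1 - projCol F
    set E := F * Fᵀ - G * Gᵀ
    have hQ : IsStarProjection Q := (isStarProjection_projCol F).one_sub
    have hQE : Q * E = -(Q * G * Gᵀ) := by
      rw [Matrix.mul_sub, ← Matrix.mul_assoc, one_sub_projCol_mul_self, Matrix.zero_mul, zero_sub,
        Matrix.mul_assoc]
    have key : lammin (Gᵀ * G) * finner (Q * G) (Q * G) ≤ finner E E :=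
      calc lammin (Gᵀ * G) * finner (Q * G) (Q * G)
          ≤ finner (Q * G * Gᵀ) (Q * G * Gᵀ) := lammin_mul_finner_le _ _
        _ = finner (Q * E) (Q * E) := by rw [hQE, finner_neg_neg]
        _ ≤ finner E E := finner_mul_self_le_of_isStarProjection hQ E
    have hpos := Real.sqrt_pos.mpr hG.lammin_pos
    rw [le_div_iff₀ hpos, fnorm, fnorm, ← Real.sqrt_mul (finner_self_nonneg _), mul_comm]
    exact Real.sqrt_le_sqrt key

/-- Equation (15) in the paper's appendix, matrix form: `sin β ≤ ρ`.
The residual of `G` outside the column space of `F` is controlled by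
`‖F Fᵀ − G Gᵀ‖_F / √(λ_min(GᵀG))`. -/
theorem stmt_9 {n m r : ℕ} (hrm : m ≤ r)
    (G : Matrix (Fin n) (Fin m) ℝ) (hG : (Gᵀ * G).PosDef)
    (F : Matrix (Fin n) (Fin r) ℝ)
    (hclose : fnorm (F * Fᵀ - G * Gᵀ) < lammin (Gᵀ * G) / Real.sqrt 2)
    (P : Matrix (Fin n) (Fin n) ℝ) (hP : P = projCol F) :
    fnorm ((1 - P) * G) ≤ fnorm (F * Fᵀ - G * Gᵀ) / Real.sqrt (lammin (Gᵀ * G)) :=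
  stmt_9_general G hG F P hP
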